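/- Take K=2 and the generalized UCB policy with f_1(n)=f_2(n)=log log n. This policy is Hannan consistent (E_θ[R_n]=o(n) for every θ∈Θ), and yet in every environment θ=(δ_a,δ_b) with 0≤b<a≤1 and Δ=a−b its expected regret satisfies E_θ[R_n] ≤ (log log n)/Δ + 1 = O(log log n). In particular, no logarithmic lower bound on expected regret holds uniformly over Θ for Hannan consistent policies. -/

import Mathlib

open MeasureTheory ProbabilityTheory Filter Asymptotics

noncomputable section

namespace Bandit

/-- Empirical mean of the first `s` values of the sequence `x`. -/
def empMean (x : ℕ → ℝ) (s : ℕ) : ℝ := (∑ u ∈ Finset.range s, x u) / s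

/-- An element of `Fin K` maximizing `g`. -/
def argmaxFin {K : ℕ} (hK : 0 < K) (g : Fin K → ℝ) : Fin K :=
  (Finset.univ.exists_max_image g ⟨⟨0, hK⟩, Finset.mem_univ _⟩).choose

theorem argmaxFin_spec {K : ℕ} (hK : 0 < K) (g : Fin K → ℝ) (j : Fin K) :
    g j ≤ g (argmaxFin hK g) := by
  have h := (Finset.univ.exists_max_image g ⟨⟨0, hK⟩, Finset.mem_univ _⟩).choose_spec
  exact h.2 j (Finset.mem_univ j)

/-- The arm pulled at round `t` by a generalized UCB policy with exploration functions `f`,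
given the reward table `x` (where `x k u` is the reward of the `(u+1)`-th pull of arm `k`)
and the vector `T` of numbers of pulls of each arm before round `t`.
During the first `K` rounds (`t ≤ K`), each arm is pulled once; afterwards an arm maximizing
the UCB index `X̂_{k,T_k(t-1)} + √(f_k(t) / T_k(t-1))` is pulled. -/
def ucbArmAux {K : ℕ} (hK : 0 < K) (f : Fin K → ℕ → ℝ) (x : Fin K → ℕ → ℝ)
    (T : Fin K → ℕ) (t : ℕ) : Fin K :=
  if h : t ≤ K then ⟨t - 1, by omega⟩
  else argmaxFin hK fun j => empMean (x j) (T j) + Real.sqrt (f j t / (T j : ℝ))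

/-- `ucbCount hK f x t k` is `T_k(t)`, the number of pulls of arm `k` during rounds `1,…,t`
by the generalized UCB policy with exploration functions `f` on the reward table `x`. -/
def ucbCount {K : ℕ} (hK : 0 < K) (f : Fin K → ℕ → ℝ) (x : Fin K → ℕ → ℝ) :
    ℕ → Fin K → ℕ
  | 0, _ => 0
  | t + 1, k =>
    ucbCount hK f x t k + if ucbArmAux hK f x (ucbCount hK f x t) (t + 1) = k then 1 else 0

/-- The arm pulled at round `t ≥ 1` by the generalized UCB policy. -/
def ucbArm {K : ℕ} (hK : 0 < K) (f : Fin K → ℕ → ℝ) (x : Fin K → ℕ → ℝ) (t : ℕ) : Fin K :=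
  ucbArmAux hK f x (ucbCount hK f x (t - 1)) t

/-- The exploration function of the UCB(ρ) policy: `f_k(t) = ρ log t` for every arm. -/
def rhoLog {K : ℕ} (ρ : ℝ) : Fin K → ℕ → ℝ := fun _ t => ρ * Real.log t

/-- The reward table of the two-armed deterministic environment `θ = (δ_a, δ_b)`:
arm `0` always gives `a` and arm `1` always gives `b`. -/
def diracTable (a b : ℝ) : Fin 2 → ℕ → ℝ := fun k _ => if k = 0 then a else b

end Bandit
namespace Bandit

/-- `ν` is a valid bandit environment: each arm's reward distribution is a probability
measure on `[0,1]`. -/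
def IsEnv {K : ℕ} (ν : Fin K → Measure ℝ) : Prop :=
  ∀ k, IsProbabilityMeasure (ν k) ∧ ν k (Set.Icc 0 1) = 1

/-- The mean of a reward distribution. -/
def mean (ν : Measure ℝ) : ℝ := ∫ x, x ∂ν

/-- `μ* = max_k μ_k`, the best mean reward of the environment `ν`. -/
def bestMean {K : ℕ} (hK : 0 < K) (ν : Fin K → Measure ℝ) : ℝ :=
  Finset.univ.sup' ⟨⟨0, hK⟩, Finset.mem_univ _⟩ fun k => mean (ν k)

/-- `Δ_k = μ* - μ_k`, the optimality gap of arm `k` in the environment `ν`. -/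
def gap {K : ℕ} (hK : 0 < K) (ν : Fin K → Measure ℝ) (k : Fin K) : ℝ :=
  bestMean hK ν - mean (ν k)

/-- `X` is a reward table process on `(Ω, P)` for the environment `ν`: the random variables
`X k u` (the reward of the `(u+1)`-th pull of arm `k`) are mutually independent, take values
in `[0,1]`, and `X k u` has distribution `ν k` for every `u`. -/
def IsRewardTable {K : ℕ} {Ω : Type*} [MeasurableSpace Ω] (P : Measure Ω)
    (ν : Fin K → Measure ℝ) (X : Fin K → ℕ → Ω → ℝ) : Prop :=
  (∀ k u, Measurable (X k u)) ∧
  (∀ k u ω, X k u ω ∈ Set.Icc (0 : ℝ) 1) ∧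
  (∀ k u, Measure.map (X k u) P = ν k) ∧
  iIndepFun (fun p : Fin K × ℕ => X p.1 p.2) P

/-- `E_θ[T_k(n)]`, the expected number of pulls of arm `k` up to round `n`, for the
generalized UCB policy with exploration functions `f`. -/
def ucbExpCount {K : ℕ} (hK : 0 < K) (f : Fin K → ℕ → ℝ) {Ω : Type*} [MeasurableSpace Ω]
    (P : Measure Ω) (X : Fin K → ℕ → Ω → ℝ) (n : ℕ) (k : Fin K) : ℝ :=
  ∫ ω, (ucbCount hK f (fun j u => X j u ω) n k : ℝ) ∂P

/-- `E_θ[R_n] = ∑_k Δ_k E_θ[T_k(n)]`, the expected regret at horizon `n` of the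
generalized UCB policy with exploration functions `f` in the environment `ν`. -/
def ucbRegret {K : ℕ} (hK : 0 < K) (f : Fin K → ℕ → ℝ) {Ω : Type*} [MeasurableSpace Ω]
    (P : Measure Ω) (ν : Fin K → Measure ℝ) (X : Fin K → ℕ → Ω → ℝ) (n : ℕ) : ℝ :=
  ∑ k, gap hK ν k * ucbExpCount hK f P X n k

end Bandit
namespace Bandit

/-- The family `Θ_k` of sets of admissible reward distributions per arm, as in the paper:
each `Θ_k` consists of probability measures on `[0,1]` and contains every two-point
distribution `p δ_a + (1-p) δ_b` with `p, a, b ∈ [0,1]`. -/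
def Admissible {K : ℕ} (Θk : Fin K → Set (Measure ℝ)) : Prop :=
  (∀ k, ∀ ν ∈ Θk k, IsProbabilityMeasure ν ∧ ν (Set.Icc 0 1) = 1) ∧
  (∀ k, ∀ p a b : ℝ, p ∈ Set.Icc (0 : ℝ) 1 → a ∈ Set.Icc (0 : ℝ) 1 → b ∈ Set.Icc (0 : ℝ) 1 →
    ENNReal.ofReal p • Measure.dirac a + ENNReal.ofReal (1 - p) • Measure.dirac b ∈ Θk k)

/-- `Θ = Θ_1 × … × Θ_K`, the set of admissible environments. -/
def envSet {K : ℕ} (Θk : Fin K → Set (Measure ℝ)) : Set (Fin K → Measure ℝ) :=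
  {θ | ∀ k, θ k ∈ Θk k}

end Bandit

/-!
The exploration bonus `√(log log t / T_k)` is unbounded while `log log t = o(t)`. Hence an arm
whose count stays below `m` eventually has a larger index than the other arm (whose count is
then almost `t`) for any rewards in `[0,1]`: every count tends to infinity, uniformly over the
reward tables. By the strong law, made uniform off a set of small probability by Egorov's
theorem, the empirical means are then eventually `ε`-accurate, and from that time on a
suboptimal arm `i` is only pulled while `ε ≤ √(log log t / T_i)`, i.e. `T_i ≤ log log t / ε²`.
This gives `E[T_i(n)] = o(n)`. In a deterministic environment the empirical means are exact
from the first pull, so the same argument with `ε = Δ` applies from round `2` on.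
-/

namespace Bandit

open Topology

def ucbIndex {K : ℕ} (f : Fin K → ℕ → ℝ) (x : Fin K → ℕ → ℝ) (T : Fin K → ℕ) (t : ℕ)
    (j : Fin K) : ℝ :=
  empMean (x j) (T j) + Real.sqrt (f j t / (T j : ℝ))

lemma empMean_mem_Icc {y : ℕ → ℝ} (hy : ∀ u, y u ∈ Set.Icc (0 : ℝ) 1) (s : ℕ) :
    empMean y s ∈ Set.Icc (0 : ℝ) 1 := by
  rcases Nat.eq_zero_or_pos s with rfl | hs
  · simp [empMean]
  refine ⟨div_nonneg (Finset.sum_nonneg fun u _ => (hy u).1) s.cast_nonneg, ?_⟩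
  rw [empMean, div_le_one (by positivity)]
  simpa using Finset.sum_le_sum fun u (_ : u ∈ Finset.range s) => (hy u).2

lemma empMean_const (c : ℝ) {s : ℕ} (hs : s ≠ 0) : empMean (fun _ => c) s = c := by
  simp [empMean, hs]

section Counts

variable {K : ℕ} {hK : 0 < K} {f : Fin K → ℕ → ℝ} {x : Fin K → ℕ → ℝ}

lemma ucbCount_succ (t : ℕ) (k : Fin K) :
    ucbCount hK f x (t + 1) k =
      ucbCount hK f x t k + if ucbArm hK f x (t + 1) = k then 1 else 0 :=
  rfl

lemma sum_ucbCount (t : ℕ) : ∑ k, ucbCount hK f x t k = t := by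
  induction t with
  | zero => simp [ucbCount]
  | succ t ih => simp [ucbCount_succ, Finset.sum_add_distrib, ih]

lemma ucbCount_le (t : ℕ) (k : Fin K) : ucbCount hK f x t k ≤ t :=
  (Finset.single_le_sum (f := fun j => ucbCount hK f x t j) (fun _ _ => Nat.zero_le _)
    (Finset.mem_univ k)).trans (sum_ucbCount t).le

lemma ucbCount_mono (k : Fin K) : Monotone fun t => ucbCount hK f x t k :=
  monotone_nat_of_le_succ fun t => by rw [ucbCount_succ]; omega

lemma ucbCount_of_le {t : ℕ} (ht : t ≤ K) (k : Fin K) :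
    ucbCount hK f x t k = if (k : ℕ) < t then 1 else 0 := by
  induction t with
  | zero => simp [ucbCount]
  | succ t ih =>
    have harm : ucbArm hK f x (t + 1) = ⟨t, by omega⟩ := by
      simp [ucbArm, ucbArmAux, ht]
    rw [ucbCount_succ, ih (by omega)]
    simp only [harm, Fin.ext_iff]
    split_ifs <;> omega

lemma one_le_ucbCount {t : ℕ} (ht : K ≤ t) (k : Fin K) : 1 ≤ ucbCount hK f x t k := by
  have h := ucbCount_mono (hK := hK) (f := f) (x := x) k ht
  simp only [ucbCount_of_le le_rfl, k.isLt, if_true] at h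
  exact h

lemma ucbIndex_le_ucbArm {t : ℕ} (ht : K ≤ t) (j : Fin K) :
    ucbIndex f x (ucbCount hK f x t) (t + 1) j ≤
      ucbIndex f x (ucbCount hK f x t) (t + 1) (ucbArm hK f x (t + 1)) := by
  rw [ucbArm, Nat.add_sub_cancel, ucbArmAux, dif_neg (by omega)]
  exact argmaxFin_spec hK (ucbIndex f x (ucbCount hK f x t) (t + 1)) j

/-- The pulled arm's bonus `√(f_i(t+1) / T_i)` must make up the gap `δ`. -/
lemma ucbCount_le_div_sq_of_ucbArm_eq {t : ℕ} (ht : K ≤ t) {i j : Fin K}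
    (hpull : ucbArm hK f x (t + 1) = i) {δ : ℝ} (hδ : 0 < δ)
    (hgap : empMean (x i) (ucbCount hK f x t i) + δ ≤ empMean (x j) (ucbCount hK f x t j)) :
    (ucbCount hK f x t i : ℝ) ≤ f i (t + 1) / δ ^ 2 := by
  have hidx := ucbIndex_le_ucbArm (hK := hK) (f := f) (x := x) ht j
  rw [hpull] at hidx
  have hbonus : δ ≤ Real.sqrt (f i (t + 1) / ucbCount hK f x t i) := by
    unfold ucbIndex at hidx
    linarith [Real.sqrt_nonneg (f j (t + 1) / ucbCount hK f x t j)]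
  have hpos : (0 : ℝ) < ucbCount hK f x t i := by exact_mod_cast one_le_ucbCount ht i
  rw [le_div_iff₀ (by positivity), ← le_div_iff₀' hpos]
  exact (Real.le_sqrt' hδ).1 hbonus

lemma ucbCount_le_max_of_ucbArm_eq_imp {i : Fin K} {τ : ℕ} {g : ℕ → ℝ}
    (hg : MonotoneOn g (Set.Ici τ))
    (h : ∀ t ≥ τ, ucbArm hK f x (t + 1) = i → (ucbCount hK f x t i : ℝ) ≤ g (t + 1)) :
    ∀ n ≥ τ, (ucbCount hK f x n i : ℝ) ≤ max (ucbCount hK f x τ i : ℝ) (g n + 1) := by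
  intro n hn
  induction n, hn using Nat.le_induction with
  | base => exact le_max_left _ _
  | succ n hn ih =>
    rw [ucbCount_succ]
    split_ifs with hpull
    · push_cast
      exact le_max_of_le_right (by linarith [h n hn hpull])
    · have hgn : g n ≤ g (n + 1) := hg hn (by simp only [Set.mem_Ici]; omega) (by omega)
      simpa using ih.trans (max_le_max le_rfl (by linarith))

theorem ucbCount_le_max_of_empMean_add_le {i j : Fin K} {τ : ℕ} (hτ : K ≤ τ) {δ : ℝ}
    (hδ : 0 < δ) (hf : MonotoneOn (f i) (Set.Ici τ))
    (hgap : ∀ t ≥ τ,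
      empMean (x i) (ucbCount hK f x t i) + δ ≤ empMean (x j) (ucbCount hK f x t j)) :
    ∀ n ≥ τ, (ucbCount hK f x n i : ℝ) ≤ max (ucbCount hK f x τ i : ℝ) (f i n / δ ^ 2 + 1) :=
  ucbCount_le_max_of_ucbArm_eq_imp
    (fun _ hs _ ht hst => div_le_div_of_nonneg_right (hf hs ht hst) (sq_nonneg δ))
    fun t ht hpull => ucbCount_le_div_sq_of_ucbArm_eq (hτ.trans ht) hpull hδ (hgap t ht)

end Counts

lemma le_apply_of_forall_lt_imp_succ {c : ℕ → ℕ} (hc : Monotone c) {σ m : ℕ}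
    (h : ∀ s ≥ σ, c s < m → c (s + 1) = c s + 1) {t : ℕ} (ht : σ + m ≤ t) : m ≤ c t := by
  have hgrow : ∀ d, min d m ≤ c (σ + d) := by
    intro d
    induction d with
    | zero => simp
    | succ d ih =>
      show min (d + 1) m ≤ c (σ + d + 1)
      have hmono : c (σ + d) ≤ c (σ + d + 1) := hc (Nat.le_succ _)
      by_cases hlt : c (σ + d) < m
      · have := h (σ + d) (by omega) hlt
        omega
      · omega
  have := hc ht
  have := hgrow m
  omega

lemma diracTable_zero (a b : ℝ) : diracTable a b 0 = fun _ => a := rfl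

lemma diracTable_one (a b : ℝ) : diracTable a b 1 = fun _ => b := rfl

section TwoArms

variable {f : Fin 2 → ℕ → ℝ} {x : Fin 2 → ℕ → ℝ}

lemma ucbCount_add_ucbCount_of_ne {k p : Fin 2} (hkp : k ≠ p) (t : ℕ) :
    ucbCount two_pos f x t k + ucbCount two_pos f x t p = t := by
  have := sum_ucbCount (hK := two_pos) (f := f) (x := x) t
  rw [Fin.sum_univ_two] at this
  fin_cases k <;> fin_cases p <;> simp_all [add_comm]

/-- An arm with fewer than `m` pulls wins once its bonus exceeds `2` and the other arm's bonus
is at most `1`. -/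
lemma ucbArm_eq_of_ucbCount_lt (hx : ∀ j u, x j u ∈ Set.Icc (0 : ℝ) 1) {t m : ℕ} (ht : 2 ≤ t)
    {k : Fin 2} (hk : ucbCount two_pos f x t k < m) (hfk : 4 * m < f k (t + 1))
    (hf : ∀ j, f j (t + 1) ≤ t - m) : ucbArm two_pos f x (t + 1) = k := by
  by_contra hp
  set p := ucbArm two_pos f x (t + 1)
  have hidx := ucbIndex_le_ucbArm (hK := two_pos) (f := f) (x := x) ht k
  have hTp : (t : ℝ) - m ≤ ucbCount two_pos f x t p := by
    have := ucbCount_add_ucbCount_of_ne (f := f) (x := x) (Ne.symm hp) t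
    rw [sub_le_iff_le_add]
    exact_mod_cast (by omega : t ≤ ucbCount two_pos f x t p + m)
  have hTk : (0 : ℝ) < ucbCount two_pos f x t k := by exact_mod_cast one_le_ucbCount ht k
  have hTk' : (ucbCount two_pos f x t k : ℝ) ≤ m := by exact_mod_cast hk.le
  have hp_le : ucbIndex f x (ucbCount two_pos f x t) (t + 1) p ≤ 2 := by
    have hbonus : Real.sqrt (f p (t + 1) / ucbCount two_pos f x t p) ≤ 1 :=
      Real.sqrt_le_one.2 (div_le_one_of_le₀ ((hf p).trans hTp) (Nat.cast_nonneg _))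
    unfold ucbIndex
    linarith [(empMean_mem_Icc (hx p) (ucbCount two_pos f x t p)).2]
  have hk_gt : 2 < ucbIndex f x (ucbCount two_pos f x t) (t + 1) k := by
    have hbonus : 2 < Real.sqrt (f k (t + 1) / ucbCount two_pos f x t k) := by
      rw [Real.lt_sqrt zero_le_two, lt_div_iff₀ hTk]
      linarith
    unfold ucbIndex
    linarith [(empMean_mem_Icc (hx k) (ucbCount two_pos f x t k)).1]
  linarith

theorem exists_forall_le_ucbCount (hf : ∀ k, Tendsto (f k) atTop atTop)
    (hf' : ∀ k, f k =o[atTop] fun t => (t : ℝ)) (m : ℕ) :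
    ∃ τ, ∀ x : Fin 2 → ℕ → ℝ, (∀ j u, x j u ∈ Set.Icc (0 : ℝ) 1) →
      ∀ t ≥ τ, ∀ k, m ≤ ucbCount two_pos f x t k := by
  have hbig : ∀ k, ∀ᶠ s : ℕ in atTop, 4 * (m : ℝ) < f k (s + 1) := fun k =>
    ((hf k).comp (tendsto_add_atTop_nat 1)).eventually_gt_atTop _
  have hsmall : ∀ k, ∀ᶠ s : ℕ in atTop, f k (s + 1) ≤ s - m := fun k => by
    filter_upwards [((hf' k).comp_tendsto (tendsto_add_atTop_nat 1)).bound one_half_pos,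
      eventually_ge_atTop (2 * m + 1)] with s hs hsm
    have hsm' : (2 * m + 1 : ℝ) ≤ s := by exact_mod_cast hsm
    simp only [Function.comp_apply, Nat.cast_add, Nat.cast_one, Real.norm_eq_abs,
      abs_of_nonneg (by positivity : (0 : ℝ) ≤ s + 1)] at hs
    linarith [le_abs_self (f k (s + 1))]
  obtain ⟨σ, hσ⟩ := eventually_atTop.1
    ((eventually_ge_atTop 2).and ((eventually_all.2 hbig).and (eventually_all.2 hsmall)))
  refine ⟨σ + m, fun x hx t ht k => le_apply_of_forall_lt_imp_succ (ucbCount_mono k)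
    (fun s hs hlt => ?_) ht⟩
  obtain ⟨h2, hfbig, hfsmall⟩ := hσ s hs
  rw [ucbCount_succ, if_pos (ucbArm_eq_of_ucbCount_lt hx h2 hlt (hfbig k) hfsmall)]

theorem ucbCount_diracTable_le {a b : ℝ} (hab : b < a) (hf : MonotoneOn (f 1) (Set.Ici 2))
    {n : ℕ} (hn : 2 ≤ n) (hfn : 0 ≤ f 1 n) :
    (a - b) * ucbCount two_pos f (diracTable a b) n 1 ≤ f 1 n / (a - b) + (a - b) := by
  have hΔ : 0 < a - b := sub_pos.2 hab
  have hbound := ucbCount_le_max_of_empMean_add_le (hK := two_pos) (x := diracTable a b)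
    (i := 1) (j := 0) le_rfl hΔ hf
    (fun t ht => by
      rw [diracTable_zero, diracTable_one,
        empMean_const _ (Nat.one_le_iff_ne_zero.1 (one_le_ucbCount ht 0)),
        empMean_const _ (Nat.one_le_iff_ne_zero.1 (one_le_ucbCount ht 1)), add_sub_cancel]) n hn
  rw [ucbCount_of_le le_rfl, if_pos (by decide), Nat.cast_one,
    max_eq_right (by linarith [div_nonneg hfn (sq_nonneg (a - b))])] at hbound
  calc (a - b) * ucbCount two_pos f (diracTable a b) n 1
      ≤ (a - b) * (f 1 n / (a - b) ^ 2 + 1) := mul_le_mul_of_nonneg_left hbound hΔ.le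
    _ = f 1 n / (a - b) + (a - b) := by field_simp

end TwoArms

lemma tendsto_log_log_natCast_atTop :
    Tendsto (fun t : ℕ => Real.log (Real.log t)) atTop atTop :=
  Real.tendsto_log_atTop.comp (Real.tendsto_log_atTop.comp tendsto_natCast_atTop_atTop)

lemma isLittleO_log_log_natCast :
    (fun t : ℕ => Real.log (Real.log t)) =o[atTop] fun t => (t : ℝ) :=
  ((Real.isLittleO_log_id_atTop.comp_tendsto Real.tendsto_log_atTop).trans
    Real.isLittleO_log_id_atTop).comp_tendsto tendsto_natCast_atTop_atTop

lemma monotoneOn_log_log_natCast :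
    MonotoneOn (fun t : ℕ => Real.log (Real.log t)) (Set.Ici 2) := by
  intro s hs t _ hst
  have hs' : (2 : ℝ) ≤ s := by exact_mod_cast hs
  have hst' : (s : ℝ) ≤ t := by exact_mod_cast hst
  exact Real.log_le_log (Real.log_pos (by linarith))
    (Real.log_le_log (by linarith) hst')

section Probability

variable {K : ℕ} {Ω : Type*} [MeasurableSpace Ω] {P : Measure Ω} {ν : Fin K → Measure ℝ}
  {X : Fin K → ℕ → Ω → ℝ}

lemma IsRewardTable.measurable_empMean (hX : IsRewardTable P ν X) (k : Fin K) (s : ℕ) :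
    Measurable fun ω => empMean (fun u => X k u ω) s :=
  (Finset.measurable_sum _ fun u _ => hX.1 k u).div_const _

lemma IsRewardTable.ae_tendsto_empMean [IsFiniteMeasure P] (hX : IsRewardTable P ν X) :
    ∀ᵐ ω ∂P, Tendsto (fun s k => empMean (fun u => X k u ω) s) atTop
      (𝓝 fun k => mean (ν k)) := by
  obtain ⟨hmeas, hbdd, hmap, hind⟩ := hX
  simp only [tendsto_pi_nhds]
  rw [ae_all_iff]
  intro k
  have hint : Integrable (X k 0) P :=
    (integrable_const (1 : ℝ)).mono' (hmeas k 0).aestronglyMeasurable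
      (ae_of_all _ fun ω => by
        rw [Real.norm_eq_abs, abs_le]
        exact ⟨by linarith [(hbdd k 0 ω).1], (hbdd k 0 ω).2⟩)
  have hmean : ∫ ω, X k 0 ω ∂P = mean (ν k) := by
    rw [mean, ← hmap k 0]
    exact (integral_map (hmeas k 0).aemeasurable aestronglyMeasurable_id).symm
  have slln := strong_law_ae_real (fun u => X k u) hint
    (fun u v huv => hind.indepFun (show ((k, u) : Fin K × ℕ) ≠ (k, v) by simp [huv]))
    (fun u => ⟨(hmeas k u).aemeasurable, (hmeas k 0).aemeasurable, by rw [hmap, hmap]⟩)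
  rw [hmean] at slln
  exact slln

/-- Egorov's theorem turns the strong law into uniform accuracy off a set of small
probability. -/
lemma IsRewardTable.exists_forall_abs_empMean_sub_lt [IsFiniteMeasure P]
    (hX : IsRewardTable P ν X) {ε δ : ℝ} (hε : 0 < ε) (hδ : 0 < δ) :
    ∃ B, MeasurableSet B ∧ P B ≤ ENNReal.ofReal δ ∧ ∃ s₀, ∀ ω ∉ B, ∀ s ≥ s₀, ∀ k,
      |empMean (fun u => X k u ω) s - mean (ν k)| < ε := by
  obtain ⟨B, hB, hPB, hunif⟩ := tendstoUniformlyOn_of_ae_tendsto'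
    (fun s => (measurable_pi_lambda _ fun k => hX.measurable_empMean k s).stronglyMeasurable)
    stronglyMeasurable_const hX.ae_tendsto_empMean hδ
  obtain ⟨s₀, hs₀⟩ := eventually_atTop.1 (Metric.tendstoUniformlyOn_iff.1 hunif ε hε)
  refine ⟨B, hB, hPB, s₀, fun ω hω s hs k => ?_⟩
  have := (dist_pi_lt_iff hε).1 (hs₀ s hs ω hω) k
  rwa [Real.dist_eq, abs_sub_comm] at this

lemma integral_le_add_mul_measureReal [IsProbabilityMeasure P] {g : Ω → ℝ} {B : Set Ω}
    (hB : MeasurableSet B) {a b : ℝ} (ha : 0 ≤ a) (hg0 : 0 ≤ g) (hgB : ∀ ω ∉ B, g ω ≤ a)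
    (hg : ∀ ω, g ω ≤ b) : ∫ ω, g ω ∂P ≤ a + b * P.real B := by
  have hle : ∀ ω, g ω ≤ a + B.indicator (fun _ => b) ω := fun ω => by
    by_cases hω : ω ∈ B
    · rw [Set.indicator_of_mem hω]; linarith [hg ω]
    · rw [Set.indicator_of_notMem hω, add_zero]; exact hgB ω hω
  calc ∫ ω, g ω ∂P ≤ ∫ ω, a + B.indicator (fun _ => b) ω ∂P :=
        integral_mono_of_nonneg (ae_of_all _ hg0)
          ((integrable_const a).add ((integrable_const b).indicator hB)) (ae_of_all _ hle)
    _ = a + b * P.real B := by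
        rw [integral_add (integrable_const a) ((integrable_const b).indicator hB),
          integral_const, integral_indicator_const _ hB]
        simp [mul_comm]

theorem ucbRegret_isLittleO {hK : 0 < K} {f : Fin K → ℕ → ℝ}
    (h : ∀ i j, mean (ν i) < mean (ν j) →
      (fun n => ucbExpCount hK f P X n i) =o[atTop] fun n => (n : ℝ)) :
    (fun n => ucbRegret hK f P ν X n) =o[atTop] fun n => (n : ℝ) := by
  obtain ⟨j, -, hj⟩ := Finset.exists_mem_eq_sup' ⟨⟨0, hK⟩, Finset.mem_univ _⟩ fun k => mean (ν k)
  have hterm : ∀ k ∈ Finset.univ,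
      (fun n => gap hK ν k * ucbExpCount hK f P X n k) =o[atTop] fun n => (n : ℝ) := by
    intro k _
    have hk : mean (ν k) ≤ mean (ν j) := hj ▸ Finset.le_sup' (fun k => mean (ν k)) (Finset.mem_univ k)
    rcases hk.lt_or_eq with hlt | heq
    · exact (h k j hlt).const_mul_left _
    · simp [gap, bestMean, hj, heq]
  simpa [ucbRegret, Finset.sum_fn] using IsLittleO.sum hterm

theorem ucbExpCount_isLittleO [IsProbabilityMeasure P] {ν : Fin 2 → Measure ℝ}
    {X : Fin 2 → ℕ → Ω → ℝ} (hX : IsRewardTable P ν X) {f : Fin 2 → ℕ → ℝ}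
    (hf : ∀ k, Tendsto (f k) atTop atTop) (hf' : ∀ k, f k =o[atTop] fun t => (t : ℝ))
    {i j : Fin 2} {N : ℕ} (hmono : MonotoneOn (f i) (Set.Ici N))
    (hij : mean (ν i) < mean (ν j)) :
    (fun n => ucbExpCount two_pos f P X n i) =o[atTop] fun n => (n : ℝ) := by
  set ε := (mean (ν j) - mean (ν i)) / 3 with hεdef
  have hε : 0 < ε := by positivity
  refine isLittleO_iff.2 fun c hc => ?_
  obtain ⟨B, hB, hPB, s₀, hs₀⟩ := hX.exists_forall_abs_empMean_sub_lt hε (half_pos hc)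
  obtain ⟨τ₀, hτ₀⟩ := exists_forall_le_ucbCount hf hf' s₀
  set τ := max (max τ₀ N) 2
  have hpath : ∀ ω ∉ B, ∀ n ≥ τ,
      (ucbCount two_pos f (fun k u => X k u ω) n i : ℝ) ≤ max (τ : ℝ) (f i n / ε ^ 2 + 1) := by
    intro ω hω n hn
    have hx : ∀ k u, X k u ω ∈ Set.Icc (0 : ℝ) 1 := fun k u => hX.2.1 k u ω
    refine (ucbCount_le_max_of_empMean_add_le (j := j) (le_max_right _ _) hε
      (hmono.mono (Set.Ici_subset_Ici.2 (by omega))) (fun t ht => ?_) n hn).trans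
      (max_le_max (by exact_mod_cast ucbCount_le τ i) le_rfl)
    have hi := abs_lt.1 (hs₀ ω hω _ (hτ₀ _ hx t (by omega) i) i)
    have hj := abs_lt.1 (hs₀ ω hω _ (hτ₀ _ hx t (by omega) j) j)
    linarith [hεdef]
  have hsmall : ∀ᶠ n : ℕ in atTop, max (τ : ℝ) (f i n / ε ^ 2 + 1) ≤ c / 2 * n := by
    have hτo := (isLittleO_const_id_atTop (τ : ℝ)).comp_tendsto tendsto_natCast_atTop_atTop
    have hfo : (fun n => f i n / ε ^ 2 + 1) =o[atTop] fun n : ℕ => (n : ℝ) := by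
      simpa [div_eq_inv_mul] using ((hf' i).const_mul_left (ε ^ 2)⁻¹).add
        ((isLittleO_const_id_atTop (1 : ℝ)).comp_tendsto tendsto_natCast_atTop_atTop)
    filter_upwards [hτo.bound (half_pos hc), hfo.bound (half_pos hc)] with n h1 h2
    simp only [Function.comp_apply, id, Real.norm_eq_abs, Nat.abs_cast] at h1 h2
    exact max_le h1 ((le_abs_self _).trans h2)
  filter_upwards [hsmall, eventually_ge_atTop τ] with n hn hτn
  have hPB' : P.real B ≤ c / 2 :=
    ENNReal.toReal_le_of_le_ofReal (half_pos hc).le hPB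
  have hE0 : 0 ≤ ucbExpCount two_pos f P X n i := integral_nonneg fun ω => Nat.cast_nonneg _
  rw [Real.norm_of_nonneg hE0, Real.norm_natCast]
  calc ucbExpCount two_pos f P X n i ≤ max (τ : ℝ) (f i n / ε ^ 2 + 1) + n * P.real B :=
        integral_le_add_mul_measureReal hB (le_max_of_le_left (Nat.cast_nonneg τ))
          (fun ω => Nat.cast_nonneg _) (fun ω hω => hpath ω hω n hτn)
          (fun ω => by exact_mod_cast ucbCount_le n i)
    _ ≤ c / 2 * n + n * (c / 2) := add_le_add hn (mul_le_mul_of_nonneg_left hPB' n.cast_nonneg)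
    _ = c * n := by ring

end Probability

theorem ucb_loglog_hannan_consistent_with_loglog_regret_general
    (Θk : Fin 2 → Set (Measure ℝ)) :
    (∀ θ ∈ envSet Θk,
      ∀ (Ω : Type) (_ : MeasurableSpace Ω) (P : Measure Ω)
        (X : Fin 2 → ℕ → Ω → ℝ), IsProbabilityMeasure P → IsRewardTable P θ X →
        (fun n : ℕ => ucbRegret (Nat.succ_pos 1) (fun _ t => Real.log (Real.log t)) P θ X n)
          =o[Filter.atTop] fun n : ℕ => (n : ℝ)) ∧
    (∀ a b : ℝ, 0 ≤ b → b < a → a ≤ 1 →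
      (∀ᶠ n : ℕ in Filter.atTop,
        (a - b) * (ucbCount (Nat.succ_pos 1) (fun _ t => Real.log (Real.log t))
            (diracTable a b) n 1 : ℝ) ≤
          Real.log (Real.log n) / (a - b) + 1) ∧
      (fun n : ℕ =>
          (a - b) * (ucbCount (Nat.succ_pos 1) (fun _ t => Real.log (Real.log t))
            (diracTable a b) n 1 : ℝ))
        =O[Filter.atTop] fun n : ℕ => Real.log (Real.log n)) := by
  refine ⟨fun θ _ Ω _ P X _ hX => ucbRegret_isLittleO fun i j hij =>
    ucbExpCount_isLittleO hX (fun _ => tendsto_log_log_natCast_atTop)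
      (fun _ => isLittleO_log_log_natCast) monotoneOn_log_log_natCast hij,
    fun a b hb hab ha => ?_⟩
  have hbound : ∀ᶠ n : ℕ in atTop,
      (a - b) * (ucbCount two_pos (fun _ t => Real.log (Real.log t)) (diracTable a b) n 1 : ℝ) ≤
        Real.log (Real.log n) / (a - b) + 1 := by
    filter_upwards [eventually_ge_atTop 2, tendsto_log_log_natCast_atTop.eventually_ge_atTop 0]
      with n hn hlog
    linarith [ucbCount_diracTable_le (f := fun _ t => Real.log (Real.log t)) hab
      monotoneOn_log_log_natCast hn hlog]
  refine ⟨hbound, IsBigO.trans (g := fun n : ℕ => Real.log (Real.log n) / (a - b) + 1) ?_ ?_⟩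
  · refine IsBigO.of_bound' (hbound.mono fun n hn => ?_)
    rw [Real.norm_of_nonneg (mul_nonneg (sub_nonneg.2 hab.le) (Nat.cast_nonneg _))]
    exact hn.trans (le_abs_self _)
  · simpa [div_eq_inv_mul] using ((isBigO_refl _ _).const_mul_left (a - b)⁻¹).add
      ((isLittleO_one_left_iff ℝ).2
        (tendsto_norm_atTop_atTop.comp tendsto_log_log_natCast_atTop)).isBigO

/-- With K = 2 and f_1(n) = f_2(n) = log log n, the generalized UCB
policy is Hannan consistent (E_θ[R_n] = o(n) for every θ ∈ Θ), and yet in every environment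
θ = (δ_a, δ_b) with 0 ≤ b < a ≤ 1 and Δ = a - b its expected regret satisfies
E_θ[R_n] ≤ (log log n)/Δ + 1, so E_θ[R_n] = O(log log n). In particular no logarithmic
lower bound on expected regret holds uniformly over Θ for Hannan consistent policies. -/
theorem ucb_loglog_hannan_consistent_with_loglog_regret
    (Θk : Fin 2 → Set (Measure ℝ)) (hΘ : Admissible Θk) :
    (∀ θ ∈ envSet Θk,
      ∀ (Ω : Type) (_ : MeasurableSpace Ω) (P : Measure Ω)
        (X : Fin 2 → ℕ → Ω → ℝ), IsProbabilityMeasure P → IsRewardTable P θ X →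
        (fun n : ℕ => ucbRegret (Nat.succ_pos 1) (fun _ t => Real.log (Real.log t)) P θ X n)
          =o[Filter.atTop] fun n : ℕ => (n : ℝ)) ∧
    (∀ a b : ℝ, 0 ≤ b → b < a → a ≤ 1 →
      (∀ᶠ n : ℕ in Filter.atTop,
        (a - b) * (ucbCount (Nat.succ_pos 1) (fun _ t => Real.log (Real.log t))
            (diracTable a b) n 1 : ℝ) ≤
          Real.log (Real.log n) / (a - b) + 1) ∧
      (fun n : ℕ =>
          (a - b) * (ucbCount (Nat.succ_pos 1) (fun _ t => Real.log (Real.log t))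
            (diracTable a b) n 1 : ℝ))
        =O[Filter.atTop] fun n : ℕ => Real.log (Real.log n)) :=
  ucb_loglog_hannan_consistent_with_loglog_regret_general Θk

end Bandit
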